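/- arXiv:1411.7301 — 3 statements merged into one kernel-verified Lean document; each statement's English description precedes it below -/
import Mathlib

section
/- Let B₀, B ∈ ℝ^{n×n}, Ψ ∈ ℝ^{n×l}, and let M ∈ ℝ^{l×l} be symmetric with B = B₀ + ΨMΨᵀ. Let s, y ∈ ℝⁿ and α, β, δ ∈ ℝ, and set p = MΨᵀs ∈ ℝ^l. Then B + [Bs y] [[α, β], [β, δ]] [Bs y]ᵀ = B₀ + [Ψ B₀s y] Ĝ [Ψ B₀s y]ᵀ, where [Ψ B₀s y] ∈ ℝ^{n×(l+2)} is the matrix obtained by appending the columns B₀s and y to Ψ, and Ĝ ∈ ℝ^{(l+2)×(l+2)} is the block matrix [[M + αppᵀ, αp, βp], [αpᵀ, α, β], [βpᵀ, β, δ]]. -/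
/-!
Since `Bs = B₀s + Ψp`, the update factor splits as `[Bs y] = W + ΨQ` with `W = [B₀s y]` and
`Q = [p 0]`. Expanding `ΨMΨᵀ + (W + ΨQ)K(W + ΨQ)ᵀ`, with `K = [[α, β], [β, δ]]`, and regrouping by
the outer factors `Ψ` and `W` gives the middle matrix `[[M + QKQᵀ, QK], [KQᵀ, K]]`, which is `Ĝ`.
-/

open Matrix

namespace Matrix

variable {R m l k : Type*} [CommRing R]

theorem fromCols_mul_fromBlocks_mul_transpose_fromCols [Fintype l] [Fintype k]
    (Ψ : Matrix m l R) (W : Matrix m k R) (M : Matrix l l R) (Q : Matrix l k R)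
    (K : Matrix k k R) :
    fromCols Ψ W * fromBlocks (M + Q * K * Qᵀ) (Q * K) (K * Qᵀ) K * (fromCols Ψ W)ᵀ
      = Ψ * M * Ψᵀ + (W + Ψ * Q) * K * (W + Ψ * Q)ᵀ := by
  rw [transpose_fromCols, fromCols_mul_fromBlocks, fromCols_mul_fromRows]
  simp only [transpose_add, transpose_mul, Matrix.mul_add, Matrix.add_mul, Matrix.mul_assoc]
  abel

def colPair (u v : m → R) : Matrix m (Fin 2) R :=
  of fun i j => if j = 0 then u i else v i

theorem colPair_add (u u' v v' : m → R) :
    colPair (u + u') (v + v') = colPair u v + colPair u' v' := by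
  ext i j
  fin_cases j <;> rfl

theorem mul_colPair [Fintype l] (A : Matrix m l R) (u v : l → R) :
    A * colPair u v = colPair (A *ᵥ u) (A *ᵥ v) := by
  ext i j
  fin_cases j <;> rfl

theorem colPair_mul_fin_two (u v : m → R) (a b c d : R) :
    colPair u v * !![a, b; c, d] = colPair (a • u + c • v) (b • u + d • v) := by
  ext i j
  fin_cases j <;> simp [colPair, mul_apply, Fin.sum_univ_two, mul_comm]

theorem colPair_mul_transpose_colPair [Fintype l] (u v : m → R) (u' v' : l → R) :
    colPair u v * (colPair u' v')ᵀ = vecMulVec u u' + vecMulVec v v' := by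
  ext i j
  simp [colPair, mul_apply, Fin.sum_univ_two, vecMulVec_apply]

end Matrix

theorem broyden_compact_induction_step_general {n l : ℕ}
    (B₀ B : Matrix (Fin n) (Fin n) ℝ)
    (Ψ : Matrix (Fin n) (Fin l) ℝ) (M : Matrix (Fin l) (Fin l) ℝ)
    (hB : B = B₀ + Ψ * M * Ψᵀ)
    (s y : Fin n → ℝ) (α β δ : ℝ) :
    B + (Matrix.of fun i (j : Fin 2) => if j = 0 then B.mulVec s i else y i) *
          !![α, β; β, δ] *
          (Matrix.of fun i (j : Fin 2) => if j = 0 then B.mulVec s i else y i)ᵀ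
    = B₀ + (Matrix.fromCols Ψ
          (Matrix.of fun i (j : Fin 2) => if j = 0 then B₀.mulVec s i else y i)) *
        (Matrix.fromBlocks
          (M + α • Matrix.vecMulVec (M.mulVec (Ψᵀ.mulVec s)) (M.mulVec (Ψᵀ.mulVec s)))
          (Matrix.of fun i (j : Fin 2) =>
            if j = 0 then α * M.mulVec (Ψᵀ.mulVec s) i else β * M.mulVec (Ψᵀ.mulVec s) i)
          (Matrix.of fun (j : Fin 2) i =>
            if j = 0 then α * M.mulVec (Ψᵀ.mulVec s) i else β * M.mulVec (Ψᵀ.mulVec s) i)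
          !![α, β; β, δ]) *
        (Matrix.fromCols Ψ
          (Matrix.of fun i (j : Fin 2) => if j = 0 then B₀.mulVec s i else y i))ᵀ := by
  set p := M *ᵥ (Ψᵀ *ᵥ s)
  set K : Matrix (Fin 2) (Fin 2) ℝ := !![α, β; β, δ]
  set Q := colPair p 0
  change B + colPair (B *ᵥ s) y * K * (colPair (B *ᵥ s) y)ᵀ
    = B₀ + fromCols Ψ (colPair (B₀ *ᵥ s) y) *
        fromBlocks (M + α • vecMulVec p p) (colPair (α • p) (β • p))
          (colPair (α • p) (β • p))ᵀ K * (fromCols Ψ (colPair (B₀ *ᵥ s) y))ᵀ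
  have hBs : colPair (B *ᵥ s) y = colPair (B₀ *ᵥ s) y + Ψ * Q := by
    rw [mul_colPair, ← colPair_add, hB, add_mulVec, mulVec_zero, add_zero,
      mulVec_mulVec, mulVec_mulVec]
  have hQK : colPair (α • p) (β • p) = Q * K := by
    simp [Q, K, colPair_mul_fin_two]
  have hK : Kᵀ = K := by
    ext i j
    fin_cases i <;> fin_cases j <;> rfl
  have hKQ : (Q * K)ᵀ = K * Qᵀ := by
    rw [transpose_mul, hK]
  have hQKQ : α • vecMulVec p p = Q * K * Qᵀ := by
    rw [← hQK, colPair_mul_transpose_colPair, vecMulVec_zero, add_zero, smul_vecMulVec]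
  rw [hBs, hQK, hKQ, hQKQ, fromCols_mul_fromBlocks_mul_transpose_fromCols, hB, add_assoc]

/-- Induction step of the compact representation: a rank-two update of a compactly
represented matrix `B = B₀ + Ψ M Ψᵀ` is again in compact form, with the augmented
factor `[Ψ B₀s y]` and the bordered middle matrix `Ĝ`. -/
theorem broyden_compact_induction_step {n l : ℕ}
    (B₀ B : Matrix (Fin n) (Fin n) ℝ)
    (Ψ : Matrix (Fin n) (Fin l) ℝ) (M : Matrix (Fin l) (Fin l) ℝ)
    (hM : M.IsSymm) (hB : B = B₀ + Ψ * M * Ψᵀ)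
    (s y : Fin n → ℝ) (α β δ : ℝ) :
    B + (Matrix.of fun i (j : Fin 2) => if j = 0 then B.mulVec s i else y i) *
          !![α, β; β, δ] *
          (Matrix.of fun i (j : Fin 2) => if j = 0 then B.mulVec s i else y i)ᵀ
    = B₀ + (Matrix.fromCols Ψ
          (Matrix.of fun i (j : Fin 2) => if j = 0 then B₀.mulVec s i else y i)) *
        (Matrix.fromBlocks
          (M + α • Matrix.vecMulVec (M.mulVec (Ψᵀ.mulVec s)) (M.mulVec (Ψᵀ.mulVec s)))
          (Matrix.of fun i (j : Fin 2) =>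
            if j = 0 then α * M.mulVec (Ψᵀ.mulVec s) i else β * M.mulVec (Ψᵀ.mulVec s) i)
          (Matrix.of fun (j : Fin 2) i =>
            if j = 0 then α * M.mulVec (Ψᵀ.mulVec s) i else β * M.mulVec (Ψᵀ.mulVec s) i)
          !![α, β; β, δ]) *
        (Matrix.fromCols Ψ
          (Matrix.of fun i (j : Fin 2) => if j = 0 then B₀.mulVec s i else y i))ᵀ :=
  broyden_compact_induction_step_general B₀ B Ψ M hB s y α β δ
end

section
/- Let n ≥ l ≥ 1, γ ∈ ℝ, let M ∈ ℝ^{l×l} be symmetric, and let Ψ ∈ ℝ^{n×l}. Suppose Ψ = Q·[R₁; 0] where Q ∈ ℝ^{n×n} is orthogonal and R₁ ∈ ℝ^{l×l} (so [R₁; 0] ∈ ℝ^{n×l} stacks R₁ above the (n−l)×l zero matrix). Set B = γIₙ + ΨMΨᵀ. Then the characteristic polynomial of B equals (X − γ)^{n−l} times the characteristic polynomial of the l×l matrix γI_l + R₁MR₁ᵀ. In particular, if d₁, …, d_l are the eigenvalues of R₁MR₁ᵀ (with multiplicity), the eigenvalues of B are γ + d₁, …, γ + d_l together with γ with multiplicity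 n − l. -/
/-!
Writing `Ψ = Q F` with `F = [R₁; 0]`, the matrix `Ψ M Ψᵀ = Q (F M Fᵀ) Qᵀ` is an orthogonal
conjugate of the block-diagonal matrix `diag(R₁ M R₁ᵀ, 0)`, whose characteristic polynomial is
`X ^ m` times that of `R₁ M R₁ᵀ`. Adding `γ I` substitutes `X - γ` for `X` on both sides.
-/

open Matrix Polynomial

namespace Matrix

variable {n k l m R : Type*}

theorem fromRows_zero_mul_mul_transpose {α : Type*} [Semiring α] [Fintype k] [Fintype l]
    (B : Matrix l k α) (M : Matrix k k α) :
    fromRows B (0 : Matrix m k α) * M * (fromRows B (0 : Matrix m k α))ᵀ =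
      fromBlocks (B * M * Bᵀ) 0 0 0 := by
  rw [transpose_fromRows, fromRows_mul, fromRows_mul_fromCols]
  simp

variable [Fintype n] [DecidableEq n] [CommRing R]

theorem charpoly_smul_one_add (γ : R) (A : Matrix n n R) :
    (γ • (1 : Matrix n n R) + A).charpoly = A.charpoly.comp (X - C γ) := by
  have hshift : γ • (1 : Matrix n n R) + A = A - scalar n (-γ) := by
    rw [scalar_apply, ← smul_one_eq_diagonal, neg_smul, sub_neg_eq_add, add_comm]
  rw [hshift, charpoly_sub_scalar, C_neg, ← sub_eq_add_neg]

theorem charpoly_mul_mul_of_mul_eq_one {P Q : Matrix n n R} (hQP : Q * P = 1)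
    (A : Matrix n n R) : (P * A * Q).charpoly = A.charpoly := by
  rw [charpoly_mul_comm, ← Matrix.mul_assoc, hQP, Matrix.one_mul]

theorem charpoly_fromBlocks_zero [Fintype l] [DecidableEq l] [Fintype m] [DecidableEq m]
    (A : Matrix l l R) :
    (fromBlocks A 0 0 (0 : Matrix m m R)).charpoly = A.charpoly * X ^ Fintype.card m := by
  rw [charpoly_fromBlocks_zero₂₁, charpoly_zero]

end Matrix

theorem charpoly_compact_quasi_newton_general {l m : ℕ} (γ : ℝ)
    (M : Matrix (Fin l) (Fin l) ℝ)
    (Ψ : Matrix (Fin l ⊕ Fin m) (Fin l) ℝ)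
    (Q : Matrix (Fin l ⊕ Fin m) (Fin l ⊕ Fin m) ℝ) (hQ : Qᵀ * Q = 1)
    (R₁ : Matrix (Fin l) (Fin l) ℝ)
    (hΨ : Ψ = Q * Matrix.fromRows R₁ (0 : Matrix (Fin m) (Fin l) ℝ)) :
    (γ • (1 : Matrix (Fin l ⊕ Fin m) (Fin l ⊕ Fin m) ℝ) + Ψ * M * Ψᵀ).charpoly
      = (X - C γ) ^ m * (γ • (1 : Matrix (Fin l) (Fin l) ℝ) + R₁ * M * R₁ᵀ).charpoly := by
  set F := Matrix.fromRows R₁ (0 : Matrix (Fin m) (Fin l) ℝ)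
  have hconj : Ψ * M * Ψᵀ = Q * (F * M * Fᵀ) * Qᵀ := by
    simp only [hΨ, transpose_mul, Matrix.mul_assoc]
  have hcore : (Ψ * M * Ψᵀ).charpoly = (R₁ * M * R₁ᵀ).charpoly * X ^ m := by
    rw [hconj, charpoly_mul_mul_of_mul_eq_one hQ, fromRows_zero_mul_mul_transpose,
      charpoly_fromBlocks_zero, Fintype.card_fin]
  rw [charpoly_smul_one_add, charpoly_smul_one_add, hcore, mul_comp, X_pow_comp, mul_comm]

/-- If `Ψ = Q [R₁; 0]` is a full QR factorization of `Ψ ∈ ℝ^{n×l}` (here `n = l + m`,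
with the row indices encoded as `Fin l ⊕ Fin m`), `M` is symmetric, and
`B = γI + Ψ M Ψᵀ`, then the characteristic polynomial of `B` is `(X - γ)^{n-l}` times
the characteristic polynomial of the `l × l` matrix `γI + R₁ M R₁ᵀ`. -/
theorem charpoly_compact_quasi_newton {l m : ℕ} (hl : 1 ≤ l) (γ : ℝ)
    (M : Matrix (Fin l) (Fin l) ℝ) (hM : M.IsSymm)
    (Ψ : Matrix (Fin l ⊕ Fin m) (Fin l) ℝ)
    (Q : Matrix (Fin l ⊕ Fin m) (Fin l ⊕ Fin m) ℝ) (hQ : Qᵀ * Q = 1)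
    (R₁ : Matrix (Fin l) (Fin l) ℝ)
    (hΨ : Ψ = Q * Matrix.fromRows R₁ (0 : Matrix (Fin m) (Fin l) ℝ)) :
    (γ • (1 : Matrix (Fin l ⊕ Fin m) (Fin l ⊕ Fin m) ℝ) + Ψ * M * Ψᵀ).charpoly
      = (X - C γ) ^ m * (γ • (1 : Matrix (Fin l) (Fin l) ℝ) + R₁ * M * R₁ᵀ).charpoly :=
  charpoly_compact_quasi_newton_general γ M Ψ Q hQ R₁ hΨ
end

section
/- Let n ≥ 2 and let s, y ∈ ℝⁿ with s ≠ 0 and sᵀy ≠ 0. Set θ = (sᵀs)/(sᵀy) and define B₁ = (1/θ)Iₙ − (1/θ)·ssᵀ/(sᵀs) + yyᵀ/(sᵀy). Then the characteristic polynomial of B₁ is p(λ) = ( λ² − (1/θ)(1 + θ·(yᵀy)/(sᵀy))·λ + 1/θ² ) · ( λ − 1/θ )^{n−2}. -/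
/-!
`B₁ − (1/θ)Iₙ = s(−(1/θ)s/(sᵀs))ᵀ + y(y/(sᵀy))ᵀ` factors as `UV` with `U = [s y]` of size `n × 2`.
Sylvester's identity `λ²·χ(UV) = λⁿ·χ(VU)` reduces its characteristic polynomial to that of the
`2 × 2` Gram-type matrix `VU`, whose trace and determinant are read off from `sᵀs`, `sᵀy`, `yᵀy`;
shifting `λ` by `1/θ` gives the quadratic factor and `(λ − 1/θ)^{n−2}`.
-/

open Matrix Polynomial

namespace Matrix

variable {R n : Type*} [CommRing R]

theorem charpoly_smul_one_add_mul_of_le [Fintype n] [DecidableEq n] {k : Type*} [Fintype k]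
    [DecidableEq k] (μ : R) (U : Matrix n k R) (V : Matrix k n R)
    (hle : Fintype.card k ≤ Fintype.card n) :
    (μ • 1 + U * V).charpoly =
      (X - C μ) ^ (Fintype.card n - Fintype.card k) * (V * U).charpoly.comp (X - C μ) := by
  have h := charpoly_sub_scalar (U * V) (-μ)
  rw [map_neg, sub_neg_eq_add, scalar_apply, ← smul_one_eq_diagonal, add_comm, map_neg,
    ← sub_eq_add_neg, charpoly_mul_comm_of_le U V hle] at h
  rw [h, mul_comp, pow_comp, X_comp]

theorem vecMulVec_add_vecMulVec (u₁ v₁ u₂ v₂ : n → R) :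
    vecMulVec u₁ v₁ + vecMulVec u₂ v₂ = (of ![u₁, u₂])ᵀ * of ![v₁, v₂] := by
  ext i j
  simp [mul_apply, Fin.sum_univ_two, vecMulVec_apply]

theorem of_mul_transpose_of_fin_two [Fintype n] (u₁ v₁ u₂ v₂ : n → R) :
    of ![v₁, v₂] * (of ![u₁, u₂])ᵀ = !![v₁ ⬝ᵥ u₁, v₁ ⬝ᵥ u₂; v₂ ⬝ᵥ u₁, v₂ ⬝ᵥ u₂] := by
  ext i j
  fin_cases i <;> fin_cases j <;> rfl

theorem charpoly_smul_one_add_vecMulVec_add_vecMulVec [Fintype n] [DecidableEq n]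
    [Nontrivial R] (μ : R) (u₁ v₁ u₂ v₂ : n → R) (hn : 2 ≤ Fintype.card n) :
    (μ • 1 + vecMulVec u₁ v₁ + vecMulVec u₂ v₂).charpoly =
      (X - C μ) ^ (Fintype.card n - 2) *
        ((X - C μ) ^ 2 - C (v₁ ⬝ᵥ u₁ + v₂ ⬝ᵥ u₂) * (X - C μ)
          + C ((v₁ ⬝ᵥ u₁) * (v₂ ⬝ᵥ u₂) - (v₁ ⬝ᵥ u₂) * (v₂ ⬝ᵥ u₁))) := by
  rw [add_assoc, vecMulVec_add_vecMulVec, charpoly_smul_one_add_mul_of_le _ _ _ (by simpa),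
    of_mul_transpose_of_fin_two, charpoly_fin_two, Fintype.card_fin]
  simp [trace_fin_two, det_fin_two]

end Matrix

/-- The characteristic polynomial of the one-update BFGS matrix
`B₁ = (1/θ)I − (1/θ)ssᵀ/(sᵀs) + yyᵀ/(sᵀy)`, with `θ = (sᵀs)/(sᵀy)`, is
`(λ² − (1/θ)(1 + θ yᵀy/(sᵀy))λ + 1/θ²)(λ − 1/θ)^{n−2}` (here `n = m + 2 ≥ 2`). -/
theorem charpoly_one_update_bfgs {m : ℕ} (s y : Fin (m + 2) → ℝ)
    (hs : s ≠ 0) (hsy : s ⬝ᵥ y ≠ 0) :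
    ((1 / ((s ⬝ᵥ s) / (s ⬝ᵥ y))) • (1 : Matrix (Fin (m + 2)) (Fin (m + 2)) ℝ)
        - (1 / ((s ⬝ᵥ s) / (s ⬝ᵥ y)) * (1 / (s ⬝ᵥ s))) • Matrix.vecMulVec s s
        + (1 / (s ⬝ᵥ y)) • Matrix.vecMulVec y y).charpoly
      = (X ^ 2
          - C (1 / ((s ⬝ᵥ s) / (s ⬝ᵥ y)) *
              (1 + ((s ⬝ᵥ s) / (s ⬝ᵥ y)) * (y ⬝ᵥ y) / (s ⬝ᵥ y))) * X
          + C (1 / ((s ⬝ᵥ s) / (s ⬝ᵥ y)) ^ 2))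
        * (X - C (1 / ((s ⬝ᵥ s) / (s ⬝ᵥ y)))) ^ m := by
  have hss : s ⬝ᵥ s ≠ 0 := fun h => hs (dotProduct_self_eq_zero.mp h)
  -- `B₁ = (1/θ) • 1 + vecMulVec (-(1/θ · 1/(sᵀs)) • s) s + vecMulVec ((1/(sᵀy)) • y) y`
  rw [sub_eq_add_neg, ← neg_smul, ← smul_vecMulVec, ← smul_vecMulVec,
    charpoly_smul_one_add_vecMulVec_add_vecMulVec _ _ _ _ _ (by simp), Fintype.card_fin,
    Nat.add_sub_cancel, mul_comm]
  simp only [dotProduct_smul, smul_eq_mul, dotProduct_comm y s]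
  set a := s ⬝ᵥ s
  set b := s ⬝ᵥ y
  set c := y ⬝ᵥ y
  refine congrArg (· * _) ?_
  rw [← _root_.one_div_pow, one_div_div]
  have htrace : -(b / a * (1 / a)) * a + 1 / b * c = c / b - b / a := by
    field_simp; ring
  have hdet : -(b / a * (1 / a)) * a * (1 / b * c) - 1 / b * b * (-(b / a * (1 / a)) * b)
      = (b / a) ^ 2 - b / a * (c / b) := by
    field_simp; ring
  have hlinear : b / a * (1 + a / b * c / b) = b / a + c / b := by
    field_simp
  rw [htrace, hdet, hlinear]
  simp only [map_sub, map_add, map_mul, map_pow]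
  ring
end
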